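/- arXiv:2605.12793 — 2 statements merged into one kernel-verified Lean document; each statement's English description precedes it below -/
import Mathlib

section
/- Let k ≥ 2 and p_1,…,p_k ≥ 2 be integers. For every natural number n there exist natural numbers d_0, d_1, …, d_n such that for every integer m, f(n,m) = Σ_{ℓ=0}^{n} d_ℓ · c(ℓ,m), where c(ℓ,m) = binom(ℓ, (ℓ+m)/2) if |m| ≤ ℓ and ℓ+m is even, and c(ℓ,m) = 0 otherwise. (Equivalently, the generating polynomial Σ_m f(n,m)q^m is a nonnegative-integer combination of the polynomials (q + q⁻¹)^ℓ for 0 ≤ ℓ ≤ n.) -/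
/-- The value in a group `G` of a word over `k` designated generators: a word of
length `n` is a function `w : Fin n → Fin k × Bool`, and its value is the ordered
product of `g (w j).1` (if the Bool is `true`) or its inverse (if `false`). -/
def wordValue {G : Type*} [Group G] {k : ℕ} (g : Fin k → G) {n : ℕ}
    (w : Fin n → Fin k × Bool) : G :=
  ((List.finRange n).map (fun j => if (w j).2 then g (w j).1 else (g (w j).1)⁻¹)).prod

/-- The number of words of length `n` whose value is the identity (cogrowth count). -/
noncomputable def cogrowthCount {G : Type*} [Group G] {k : ℕ} (g : Fin k → G) (n : ℕ) : ℕ :=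
  Nat.card {w : Fin n → Fin k × Bool // wordValue g w = 1}

/-- The distinguished index `0` in `Fin k` when `2 ≤ k`. -/
def fin0 {k : ℕ} (hk : 2 ≤ k) : Fin k := ⟨0, Nat.lt_of_lt_of_le Nat.zero_lt_two hk⟩

/-- Relators `a_i ^ (p i) * (a_{i₀} ^ (p i₀))⁻¹` for the presented group
`⟨a_1, …, a_k ∣ a_1^{p_1} = ⋯ = a_k^{p_k}⟩` (with distinguished index `i₀`). -/
def Grels {k : ℕ} (p : Fin k → ℕ) (i₀ : Fin k) : Set (FreeGroup (Fin k)) :=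
  { r | ∃ i : Fin k, r = FreeGroup.of i ^ (p i) * (FreeGroup.of i₀ ^ (p i₀))⁻¹ }

/-- `fcount p i₀ n m` is the number of words of length `n` in the generators of
`G(p_1,…,p_k)` and their inverses whose value equals `Δ^m`, where `Δ = a_{i₀}^{p i₀}`. -/
noncomputable def fcount {k : ℕ} (p : Fin k → ℕ) (i₀ : Fin k) (n : ℕ) (m : ℤ) : ℕ :=
  Nat.card {w : Fin n → Fin k × Bool //
    wordValue (fun i => (PresentedGroup.of i : PresentedGroup (Grels p i₀))) w
      = ((PresentedGroup.of i₀ : PresentedGroup (Grels p i₀)) ^ (p i₀)) ^ m}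

/-!
`Δ` is central, since `Δ = a_i ^ p_i` for every `i`. Left multiplication by the generators
therefore acts on pairs `(l, z)` standing for `a_{i₁}^{x₁} ⋯ a_{i_r}^{x_r} · Δ^z`, where `l` is a
reduced syllable word with `1 ≤ x_j < p_{i_j}`, and evaluating such a pair in the group is
equivariant. So the words with value `Δ^m` are exactly the walks from `([], 0)` to `([], m)`.

A syllable `a_i^x` can also be read as `Δ · a_i^{-(p_i - x)}`. The number of walks to `(l, z)` is
the sum, over the `2^r` readings of `l` with one unit of winding per reflected syllable, of a
weight obeying a recursion with nonnegative coefficients. In that recursion a walk never winds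
around the cycle it is in and leaves it only downwards, through `x = 1`. A new excursion into the
cycle of `a_j` is entered at `1` with weight `2` (an excursion returning to the side it started
from has winding `0` and either orientation) or at `p_j - 1` with weight `q + q⁻¹` (one that
crosses over winds once, in either direction). For `l = []` there is a single reading, so the
count is a sum of products of `2`'s and at most `n` factors `q + q⁻¹`.
-/

section Words

variable {G : Type*} [Group G] {k : ℕ} (g : Fin k → G)

def letterValue (e : Fin k × Bool) : G := if e.2 then g e.1 else (g e.1)⁻¹

lemma wordValue_cons {n : ℕ} (e : Fin k × Bool) (w : Fin n → Fin k × Bool) :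
    wordValue g (Fin.cons e w : Fin (n + 1) → Fin k × Bool) = letterValue g e * wordValue g w := by
  simp [wordValue, letterValue, List.finRange_succ, Function.comp_def]

lemma map_wordValue {H : Type*} [Group H] (f : G →* H) {n : ℕ} (w : Fin n → Fin k × Bool) :
    f (wordValue g w) = wordValue (f ∘ g) w := by
  simp [wordValue, map_list_prod, apply_ite f, Function.comp_def]

variable {X : Type*} [MulAction G X]

noncomputable def walkCount (x₀ : X) (t : ℕ) (x : X) : ℕ :=
  Nat.card {w : Fin t → Fin k × Bool // wordValue g w • x₀ = x}

lemma walkCount_zero [DecidableEq X] (x₀ x : X) :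
    walkCount g x₀ 0 x = if x₀ = x then 1 else 0 := by
  split_ifs with h <;> simp [walkCount, wordValue, h]

lemma walkCount_succ (x₀ : X) (t : ℕ) (x : X) :
    walkCount g x₀ (t + 1) x = ∑ e, walkCount g x₀ t ((letterValue g e)⁻¹ • x) := by
  have split := (Fin.consEquiv (n := t) fun _ => Fin k × Bool).subtypeEquiv
    (p := fun c => wordValue g (Fin.cons c.1 c.2) • x₀ = x)
    (q := fun w => wordValue g w • x₀ = x) fun _ => Iff.rfl
  rw [walkCount, ← Nat.card_congr split,
    Nat.card_congr (Equiv.subtypeProdEquivSigmaSubtype fun e w =>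
      wordValue g (Fin.cons e w) • x₀ = x), Nat.card_sigma]
  refine Finset.sum_congr rfl fun e _ => Nat.card_congr (Equiv.subtypeEquivRight fun w => ?_)
  rw [wordValue_cons, mul_smul, eq_inv_smul_iff]

end Words

section NormalForm

variable {k : ℕ} (p : Fin k → ℕ)

def freshLetters : List (Fin k × ℕ) → Finset (Fin k)
  | [] => Finset.univ
  | (j, _) :: _ => Finset.univ.erase j

def IsNormalForm : List (Fin k × ℕ) → Prop
  | [] => True
  | (i, x) :: l => 1 ≤ x ∧ x < p i ∧ i ∈ freshLetters l ∧ IsNormalForm l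

def stepUp (i : Fin k) : List (Fin k × ℕ) × ℤ → List (Fin k × ℕ) × ℤ
  | ((j, x) :: l, z) =>
    if j = i then if x + 1 = p i then (l, z + 1) else ((i, x + 1) :: l, z)
    else ((i, 1) :: (j, x) :: l, z)
  | ([], z) => ([(i, 1)], z)

def stepDown (i : Fin k) : List (Fin k × ℕ) × ℤ → List (Fin k × ℕ) × ℤ
  | ((j, x) :: l, z) =>
    if j = i then if x = 1 then (l, z) else ((i, x - 1) :: l, z)
    else ((i, p i - 1) :: (j, x) :: l, z - 1)
  | ([], z) => ([(i, p i - 1)], z - 1)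

variable {p}

lemma mem_freshLetters_cons {i j : Fin k} {x : ℕ} {l : List (Fin k × ℕ)} :
    i ∈ freshLetters ((j, x) :: l) ↔ i ≠ j := by
  simp [freshLetters]

lemma mem_freshLetters_or_eq_cons (i : Fin k) (l : List (Fin k × ℕ)) :
    i ∈ freshLetters l ∨ ∃ x l', l = (i, x) :: l' := by
  rcases l with _ | ⟨⟨j, x⟩, l⟩
  · exact .inl (Finset.mem_univ i)
  · rcases eq_or_ne i j with rfl | hij
    · exact .inr ⟨x, l, rfl⟩
    · exact .inl (mem_freshLetters_cons.2 hij)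

lemma stepUp_self (i : Fin k) (x : ℕ) (l : List (Fin k × ℕ)) (z : ℤ) :
    stepUp p i ((i, x) :: l, z) = if x + 1 = p i then (l, z + 1) else ((i, x + 1) :: l, z) := by
  simp [stepUp]

lemma stepDown_self (i : Fin k) (x : ℕ) (l : List (Fin k × ℕ)) (z : ℤ) :
    stepDown p i ((i, x) :: l, z) = if x = 1 then (l, z) else ((i, x - 1) :: l, z) := by
  simp [stepDown]

lemma stepUp_of_mem_freshLetters {i : Fin k} {l : List (Fin k × ℕ)} (h : i ∈ freshLetters l)
    (z : ℤ) : stepUp p i (l, z) = ((i, 1) :: l, z) := by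
  rcases l with _ | ⟨⟨j, x⟩, l⟩
  · rfl
  · simp [stepUp, Ne.symm (mem_freshLetters_cons.1 h)]

lemma stepDown_of_mem_freshLetters {i : Fin k} {l : List (Fin k × ℕ)} (h : i ∈ freshLetters l)
    (z : ℤ) : stepDown p i (l, z) = ((i, p i - 1) :: l, z - 1) := by
  rcases l with _ | ⟨⟨j, x⟩, l⟩
  · rfl
  · simp [stepDown, Ne.symm (mem_freshLetters_cons.1 h)]

lemma stepDown_stepUp {l : List (Fin k × ℕ)} (hl : IsNormalForm p l) (i : Fin k) (z : ℤ) :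
    stepDown p i (stepUp p i (l, z)) = (l, z) := by
  rcases mem_freshLetters_or_eq_cons i l with hi | ⟨x, l, rfl⟩
  · rw [stepUp_of_mem_freshLetters hi, stepDown_self, if_pos rfl]
  obtain ⟨hx, -, hfresh, -⟩ := hl
  rw [stepUp_self]
  split_ifs with htop
  · rw [stepDown_of_mem_freshLetters hfresh, add_sub_cancel_right, ← htop,
      Nat.add_sub_cancel]
  · rw [stepDown_self, if_neg (by omega), Nat.add_sub_cancel]

lemma IsNormalForm.stepUp (hp : ∀ i, 2 ≤ p i) {l : List (Fin k × ℕ)} (hl : IsNormalForm p l)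
    (i : Fin k) (z : ℤ) :
    IsNormalForm p (stepUp p i (l, z)).1 := by
  have := hp i
  rcases mem_freshLetters_or_eq_cons i l with hi | ⟨x, l, rfl⟩
  · rw [stepUp_of_mem_freshLetters hi]
    exact ⟨le_rfl, by omega, hi, hl⟩
  obtain ⟨-, hx, hfresh, hl⟩ := hl
  rw [stepUp_self]
  split_ifs
  exacts [hl, ⟨by omega, by omega, hfresh, hl⟩]

lemma IsNormalForm.stepDown (hp : ∀ i, 2 ≤ p i) {l : List (Fin k × ℕ)} (hl : IsNormalForm p l)
    (i : Fin k) (z : ℤ) :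
    IsNormalForm p (stepDown p i (l, z)).1 := by
  have := hp i
  rcases mem_freshLetters_or_eq_cons i l with hi | ⟨x, l, rfl⟩
  · rw [stepDown_of_mem_freshLetters hi]
    exact ⟨by omega, by omega, hi, hl⟩
  obtain ⟨hx, hx', hfresh, hl⟩ := hl
  rw [stepDown_self]
  split_ifs
  exacts [hl, ⟨by omega, by omega, hfresh, hl⟩]

lemma stepUp_stepDown (hp : ∀ i, 2 ≤ p i) {l : List (Fin k × ℕ)} (hl : IsNormalForm p l)
    (i : Fin k) (z : ℤ) :
    stepUp p i (stepDown p i (l, z)) = (l, z) := by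
  have := hp i
  rcases mem_freshLetters_or_eq_cons i l with hi | ⟨x, l, rfl⟩
  · rw [stepDown_of_mem_freshLetters hi, stepUp_self, if_pos (by omega), sub_add_cancel]
  obtain ⟨hx, hx', hfresh, -⟩ := hl
  rw [stepDown_self]
  split_ifs with hbot
  · rw [stepUp_of_mem_freshLetters hfresh, hbot]
  · rw [stepUp_self, if_neg (by omega), Nat.sub_add_cancel hx]

end NormalForm

section Permutations

variable {k : ℕ} {p : Fin k → ℕ}

lemma stepUp_iterate_climb (i : Fin k) (l : List (Fin k × ℕ)) (z : ℤ) {x d : ℕ}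
    (h : x + d < p i) : (stepUp p i)^[d] ((i, x) :: l, z) = ((i, x + d) :: l, z) := by
  induction d with
  | zero => rfl
  | succ d ih =>
    rw [Function.iterate_succ_apply', ih (by omega), stepUp_self, if_neg (by omega), add_assoc]

lemma stepUp_iterate_of_lt (i : Fin k) (l : List (Fin k × ℕ)) (z : ℤ) {x : ℕ} (h : x < p i) :
    (stepUp p i)^[p i - x] ((i, x) :: l, z) = (l, z + 1) := by
  obtain ⟨d, hd⟩ : ∃ d, p i - x = d + 1 := ⟨p i - x - 1, by omega⟩
  rw [hd, Function.iterate_succ_apply', stepUp_iterate_climb i l z (by omega), stepUp_self,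
    if_pos (by omega)]

lemma stepUp_iterate_of_mem_freshLetters {i : Fin k} {l : List (Fin k × ℕ)}
    (hi : i ∈ freshLetters l) (z : ℤ) {x : ℕ} (hx : 1 ≤ x) (h : x < p i) :
    (stepUp p i)^[x] (l, z) = ((i, x) :: l, z) := by
  obtain ⟨d, rfl⟩ : ∃ d, x = d + 1 := ⟨x - 1, by omega⟩
  rw [Function.iterate_add_apply, Function.iterate_one, stepUp_of_mem_freshLetters hi,
    stepUp_iterate_climb i l z (by omega), add_comm]

lemma stepUp_iterate_eq (hp : ∀ i, 2 ≤ p i) (i : Fin k) {l : List (Fin k × ℕ)}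
    (hl : IsNormalForm p l) (z : ℤ) : (stepUp p i)^[p i] (l, z) = (l, z + 1) := by
  have := hp i
  rcases mem_freshLetters_or_eq_cons i l with hi | ⟨x, l, rfl⟩
  · rw [show p i = (p i - 1) + 1 by omega, Function.iterate_add_apply,
      stepUp_iterate_of_mem_freshLetters hi z le_rfl (by omega),
      stepUp_iterate_of_lt i l z (by omega)]
  · obtain ⟨hx, hx', hfresh, -⟩ := hl
    rw [show p i = x + (p i - x) by omega, Function.iterate_add_apply,
      stepUp_iterate_of_lt i l z hx', stepUp_iterate_of_mem_freshLetters hfresh _ hx hx']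

variable (p)

abbrev NFState := {s : List (Fin k × ℕ) × ℤ // IsNormalForm p s.1}

def NFState.base : NFState p := ⟨([], 0), trivial⟩

def windPerm : Equiv.Perm (NFState p) where
  toFun s := ⟨(s.1.1, s.1.2 + 1), s.2⟩
  invFun s := ⟨(s.1.1, s.1.2 - 1), s.2⟩
  left_inv s := by simp
  right_inv s := by simp

lemma windPerm_zpow_apply (m : ℤ) (s : NFState p) :
    (windPerm p ^ m) s = ⟨(s.1.1, s.1.2 + m), s.2⟩ := by
  induction m using Int.induction_on with
  | zero => simp
  | succ m ih =>
    rw [add_comm, zpow_one_add, Equiv.Perm.mul_apply, ih]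
    simp [windPerm]
    ring
  | pred m ih =>
    rw [sub_eq_neg_add, zpow_add, zpow_neg_one, Equiv.Perm.mul_apply, ih]
    simp [windPerm, Equiv.Perm.inv_def]
    ring

variable (hp : ∀ i, 2 ≤ p i)

def genPerm (i : Fin k) : Equiv.Perm (NFState p) where
  toFun s := ⟨stepUp p i s.1, s.2.stepUp hp i s.1.2⟩
  invFun s := ⟨stepDown p i s.1, s.2.stepDown hp i s.1.2⟩
  left_inv s := Subtype.ext (stepDown_stepUp s.2 i s.1.2)
  right_inv s := Subtype.ext (stepUp_stepDown hp s.2 i s.1.2)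

lemma genPerm_pow (i : Fin k) : genPerm p hp i ^ p i = windPerm p := by
  ext s : 1
  have hsemi : Function.Semiconj Subtype.val (genPerm p hp i) (stepUp p i) := fun _ => rfl
  apply Subtype.ext
  rw [Equiv.Perm.coe_pow, hsemi.iterate_right (p i) s, stepUp_iterate_eq hp i s.2]
  rfl

end Permutations

section PresentedGroup

variable {k : ℕ} (p : Fin k → ℕ) (i₀ : Fin k)

local notation "Gp" => PresentedGroup (Grels p i₀)

def delta : Gp := PresentedGroup.of i₀ ^ p i₀

lemma of_pow_eq_delta (i : Fin k) : (PresentedGroup.of i : Gp) ^ p i = delta p i₀ := by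
  have h : PresentedGroup.mk (Grels p i₀) (FreeGroup.of i ^ p i * (FreeGroup.of i₀ ^ p i₀)⁻¹) = 1 :=
    (QuotientGroup.eq_one_iff _).2 (Subgroup.subset_normalClosure ⟨i, rfl⟩)
  rw [map_mul, map_inv, map_pow, map_pow] at h
  exact mul_inv_eq_one.1 h

lemma commute_delta (g : Gp) : Commute (delta p i₀) g := by
  have hg : g ∈ Subgroup.closure (Set.range PresentedGroup.of) := by
    rw [PresentedGroup.closure_range_of]; trivial
  induction hg using Subgroup.closure_induction with
  | mem _ hx =>
    obtain ⟨i, rfl⟩ := hx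
    rw [← of_pow_eq_delta p i₀ i]
    exact Commute.pow_left (Commute.refl _) _
  | one => exact Commute.one_right _
  | mul _ _ _ _ h₁ h₂ => exact h₁.mul_right h₂
  | inv _ _ h => exact h.inv_right

def nfValue (s : List (Fin k × ℕ) × ℤ) : Gp :=
  (s.1.map fun e => (PresentedGroup.of e.1 : Gp) ^ e.2).prod * delta p i₀ ^ s.2

lemma nfValue_stepUp (i : Fin k) (s : List (Fin k × ℕ) × ℤ) :
    nfValue p i₀ (stepUp p i s) = PresentedGroup.of i * nfValue p i₀ s := by
  obtain ⟨_ | ⟨⟨j, x⟩, l⟩, z⟩ := s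
  · simp [stepUp, nfValue]
  by_cases hj : j = i
  · subst hj
    rw [stepUp_self]
    split_ifs with htop
    · simp only [nfValue, List.map_cons, List.prod_cons]
      rw [← mul_assoc, ← mul_assoc, ← pow_succ', htop, of_pow_eq_delta, (commute_delta p i₀ _).eq,
        mul_assoc, ← zpow_one_add, add_comm]
    · simp [nfValue, pow_succ', mul_assoc]
  · simp [stepUp, nfValue, hj, mul_assoc]

variable {p} (hp : ∀ i, 2 ≤ p i)

noncomputable def nfAction : Gp →* Equiv.Perm (NFState p) :=
  PresentedGroup.toGroup (f := genPerm p hp) (by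
    rintro _ ⟨i, rfl⟩
    simp [genPerm_pow])

lemma nfValue_nfAction (g : Gp) (s : NFState p) :
    nfValue p i₀ (nfAction i₀ hp g s).1 = g * nfValue p i₀ s.1 := by
  have hg : g ∈ Subgroup.closure (Set.range PresentedGroup.of) := by
    rw [PresentedGroup.closure_range_of]; trivial
  induction hg using Subgroup.closure_induction generalizing s with
  | mem _ hx =>
    obtain ⟨i, rfl⟩ := hx
    rw [nfAction, PresentedGroup.toGroup.of]
    exact nfValue_stepUp p i₀ i s.1
  | one => simp
  | mul _ _ _ _ h₁ h₂ => rw [map_mul, Equiv.Perm.mul_apply, h₁, h₂, mul_assoc]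
  | inv g _ h =>
    rw [map_inv, eq_inv_mul_iff_mul_eq, ← h, ← Equiv.Perm.mul_apply, mul_inv_cancel,
      Equiv.Perm.one_apply]

lemma nfAction_apply_base_eq_iff (g : Gp) (m : ℤ) :
    nfAction i₀ hp g (NFState.base p) = ⟨([], m), trivial⟩ ↔ g = delta p i₀ ^ m := by
  constructor
  · intro h
    have := nfValue_nfAction i₀ hp g (NFState.base p)
    rw [h] at this
    simpa [nfValue, NFState.base] using this.symm
  · rintro rfl
    have h : nfAction i₀ hp (delta p i₀) = windPerm p := by
      rw [delta, map_pow, nfAction, PresentedGroup.toGroup.of, genPerm_pow]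
    rw [map_zpow, h, windPerm_zpow_apply]
    simp [NFState.base]

lemma fcount_eq_walkCount (n : ℕ) (m : ℤ) :
    fcount p i₀ n m = walkCount (genPerm p hp) (NFState.base p) n ⟨([], m), trivial⟩ := by
  have h : ⇑(nfAction i₀ hp) ∘ PresentedGroup.of = genPerm p hp :=
    funext fun i => PresentedGroup.toGroup.of _
  refine Nat.card_congr (Equiv.subtypeEquivRight fun w => ?_)
  rw [← h, ← map_wordValue, Equiv.Perm.smul_def, nfAction_apply_base_eq_iff]
  rfl

end PresentedGroup

section PathCount

/- A function `f : ℤ → ℕ` stands for the Laurent polynomial `∑ z, f z • q ^ z`: `shiftSum` is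
multiplication by `q + q⁻¹`, and `pathCount ℓ` is `(q + q⁻¹) ^ ℓ`. -/
def shiftSum (f : ℤ → ℕ) : ℤ → ℕ := fun z => f (z - 1) + f (z + 1)

def pathCount : ℕ → ℤ → ℕ
  | 0 => fun m => if m = 0 then 1 else 0
  | ℓ + 1 => shiftSum (pathCount ℓ)

lemma pathCount_eq (ℓ : ℕ) (m : ℤ) :
    pathCount ℓ m = if |m| ≤ ℓ ∧ Even ((ℓ : ℤ) + m) then ℓ.choose ((ℓ + m) / 2).toNat else 0 := by
  induction ℓ generalizing m with
  | zero =>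
    by_cases hm : m = 0
    · simp [pathCount, hm]
    · simp [pathCount, hm, abs_nonpos_iff]
  | succ ℓ ih =>
    simp only [pathCount, shiftSum, ih, abs_le, Int.even_iff]
    push_cast
    split_ifs <;> try omega
    · obtain ⟨j, hj⟩ : ∃ j : ℕ, ((ℓ : ℤ) + (m - 1)) / 2 = j :=
        ⟨_, (Int.toNat_of_nonneg (by omega)).symm⟩
      rw [hj, show ((ℓ : ℤ) + (m + 1)) / 2 = (j + 1 : ℕ) by omega,
        show ((ℓ : ℤ) + 1 + m) / 2 = (j + 1 : ℕ) by omega]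
      simp only [Int.toNat_natCast, Nat.choose_succ_succ']
    · rw [show ((ℓ : ℤ) + (m - 1)) / 2 = (ℓ : ℕ) by omega,
        show ((ℓ : ℤ) + 1 + m) / 2 = (ℓ + 1 : ℕ) by omega]
      simp only [Int.toNat_natCast, Nat.choose_self]
    · rw [show ((ℓ : ℤ) + (m + 1)) / 2 = (0 : ℕ) by omega,
        show ((ℓ : ℤ) + 1 + m) / 2 = (0 : ℕ) by omega]
      simp only [Int.toNat_natCast, Nat.choose_zero_right]

def IsPathCountComb (n : ℕ) (f : ℤ → ℕ) : Prop :=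
  ∃ d : ℕ → ℕ, ∀ m, f m = ∑ ℓ ∈ Finset.range (n + 1), d ℓ * pathCount ℓ m

namespace IsPathCountComb

variable {n : ℕ} {f g : ℤ → ℕ}

lemma zero : IsPathCountComb n 0 := ⟨0, by simp⟩

lemma pathCount_zero : IsPathCountComb n (pathCount 0) :=
  ⟨fun ℓ => if ℓ = 0 then 1 else 0, fun m => by simp [Finset.sum_ite_eq']⟩

lemma add (hf : IsPathCountComb n f) (hg : IsPathCountComb n g) : IsPathCountComb n (f + g) := by
  obtain ⟨d, hd⟩ := hf
  obtain ⟨e, he⟩ := hg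
  exact ⟨d + e, fun m => by simp [hd, he, add_mul, Finset.sum_add_distrib]⟩

lemma sum {ι : Type*} (s : Finset ι) {F : ι → ℤ → ℕ} (h : ∀ i ∈ s, IsPathCountComb n (F i)) :
    IsPathCountComb n (∑ i ∈ s, F i) :=
  Finset.sum_induction _ _ (fun _ _ => add) zero h

lemma ite (c : Prop) [Decidable c] (hf : IsPathCountComb n f) (hg : IsPathCountComb n g) :
    IsPathCountComb n (if c then f else g) := by
  split_ifs
  exacts [hf, hg]

lemma mono {n' : ℕ} (h : n ≤ n') (hf : IsPathCountComb n f) : IsPathCountComb n' f := by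
  obtain ⟨d, hd⟩ := hf
  refine ⟨fun ℓ => if ℓ ≤ n then d ℓ else 0, fun m => ?_⟩
  rw [hd, ← Finset.sum_subset (Finset.range_subset_range.2 (by omega : n + 1 ≤ n' + 1))]
  · refine Finset.sum_congr rfl fun ℓ hℓ => ?_
    simp [Nat.lt_succ_iff.1 (Finset.mem_range.1 hℓ)]
  · intro ℓ _ hℓ
    simp only [Finset.mem_range, not_lt] at hℓ
    simp [show ¬ℓ ≤ n by omega]

lemma shiftSum (hf : IsPathCountComb n f) : IsPathCountComb (n + 1) (shiftSum f) := by
  obtain ⟨d, hd⟩ := hf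
  refine ⟨fun ℓ => if ℓ = 0 then 0 else d (ℓ - 1), fun m => ?_⟩
  rw [Finset.sum_range_succ']
  simp [_root_.shiftSum, pathCount, hd, mul_add, Finset.sum_add_distrib]

end IsPathCountComb

end PathCount

section Reflection

variable {k : ℕ} (p : Fin k → ℕ)

/- `reflectSum p V l z = ∑ B, V (l with the syllables in `B` reflected) (z + #B)`, where
reflecting `(i, x)` gives `(i, p i - x)`. -/
def reflectSum (V : List (Fin k × ℕ) → ℤ → ℕ) : List (Fin k × ℕ) → ℤ → ℕ
  | [] => V []
  | (i, x) :: l => fun z =>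
    reflectSum (fun l' => V ((i, x) :: l')) l z +
      reflectSum (fun l' => V ((i, p i - x) :: l')) l (z + 1)

def cycleStep (V : List (Fin k × ℕ) → ℤ → ℕ) : List (Fin k × ℕ) → ℤ → ℕ
  | [] => 0
  | (i, x) :: l =>
    (if x + 1 = p i then 0 else V ((i, x + 1) :: l)) + (if x = 1 then V l else V ((i, x - 1) :: l))

def pushStep (V : List (Fin k × ℕ) → ℤ → ℕ) (j : Fin k) (l : List (Fin k × ℕ)) : ℤ → ℕ :=
  2 • V ((j, 1) :: l) + shiftSum (V ((j, p j - 1) :: l))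

def stepWeight (V : List (Fin k × ℕ) → ℤ → ℕ) (l : List (Fin k × ℕ)) : ℤ → ℕ :=
  cycleStep p V l + ∑ j ∈ freshLetters l, pushStep p V j l

def windingWeight : ℕ → List (Fin k × ℕ) → ℤ → ℕ
  | 0 => fun l => if l = [] then pathCount 0 else 0
  | t + 1 => stepWeight p (windingWeight t)

variable {p}

lemma isPathCountComb_windingWeight (t : ℕ) (l : List (Fin k × ℕ)) :
    IsPathCountComb t (windingWeight p t l) := by
  induction t generalizing l with
  | zero => exact .ite _ .pathCount_zero .zero
  | succ t ih =>
    refine .add (.mono t.le_succ ?_) (.sum _ fun j _ => .add (.mono t.le_succ ?_) (ih _).shiftSum)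
    · rcases l with _ | ⟨⟨i, x⟩, l⟩
      exacts [.zero, .add (.ite _ .zero (ih _)) (.ite _ (ih _) (ih _))]
    · exact two_nsmul (windingWeight p t ((j, 1) :: l)) ▸ (ih _).add (ih _)

lemma reflectSum_add (V W : List (Fin k × ℕ) → ℤ → ℕ) (l : List (Fin k × ℕ)) :
    reflectSum p (fun l' => V l' + W l') l = reflectSum p V l + reflectSum p W l := by
  induction l generalizing V W with
  | nil => rfl
  | cons e l ih =>
    obtain ⟨i, x⟩ := e
    funext z
    simp only [reflectSum, ih, Pi.add_apply]
    exact add_add_add_comm _ _ _ _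

lemma reflectSum_zero (l : List (Fin k × ℕ)) : reflectSum p (fun _ => 0) l = 0 := by
  induction l with
  | nil => rfl
  | cons e l ih => obtain ⟨i, x⟩ := e; funext z; simp [reflectSum, ih]

lemma reflectSum_sum {ι : Type*} (s : Finset ι) (V : ι → List (Fin k × ℕ) → ℤ → ℕ)
    (l : List (Fin k × ℕ)) :
    reflectSum p (fun l' => ∑ j ∈ s, V j l') l = ∑ j ∈ s, reflectSum p (V j) l := by
  classical
  induction s using Finset.induction_on with
  | empty => simpa using reflectSum_zero l
  | insert j s hj ih => simp only [Finset.sum_insert hj, reflectSum_add, ih]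

lemma reflectSum_ite (c : Prop) [Decidable c] (V W : List (Fin k × ℕ) → ℤ → ℕ)
    (l : List (Fin k × ℕ)) :
    reflectSum p (fun l' => if c then V l' else W l') l =
      if c then reflectSum p V l else reflectSum p W l := by
  split_ifs <;> rfl

lemma reflectSum_shift (V : List (Fin k × ℕ) → ℤ → ℕ) (c : ℤ) (l : List (Fin k × ℕ)) (z : ℤ) :
    reflectSum p (fun l' z' => V l' (z' + c)) l z = reflectSum p V l (z + c) := by
  induction l generalizing V z with
  | nil => rfl
  | cons e l ih =>
    obtain ⟨i, x⟩ := e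
    simp only [reflectSum, ih, add_right_comm z c 1]

lemma reflectSum_shiftSum (V : List (Fin k × ℕ) → ℤ → ℕ) (l : List (Fin k × ℕ)) :
    reflectSum p (fun l' => shiftSum (V l')) l = shiftSum (reflectSum p V l) := by
  funext z
  change reflectSum p (fun l' => (fun z' => V l' (z' + -1)) + fun z' => V l' (z' + 1)) l z = _
  rw [reflectSum_add, Pi.add_apply, reflectSum_shift, reflectSum_shift]
  rfl

lemma reflectSum_congr {V W : List (Fin k × ℕ) → ℤ → ℕ} {l : List (Fin k × ℕ)}
    (h : ∀ l', l'.map Prod.fst = l.map Prod.fst → V l' = W l') :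
    reflectSum p V l = reflectSum p W l := by
  induction l generalizing V W with
  | nil => exact h [] rfl
  | cons e l ih =>
    obtain ⟨i, x⟩ := e
    funext z
    simp only [reflectSum]
    rw [ih fun l' hl' => h _ (by simp [hl']), ih fun l' hl' => h _ (by simp [hl'])]

end Reflection

section Intertwining

variable {k : ℕ} {p : Fin k → ℕ}

lemma freshLetters_congr {l l' : List (Fin k × ℕ)} (h : l'.map Prod.fst = l.map Prod.fst) :
    freshLetters l' = freshLetters l := by
  rcases l with _ | ⟨⟨i, x⟩, l⟩ <;> rcases l' with _ | ⟨⟨j, y⟩, l'⟩ <;> simp_all [freshLetters]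

lemma reflectSum_stepWeight_eq (V : List (Fin k × ℕ) → ℤ → ℕ) (l : List (Fin k × ℕ)) :
    reflectSum p (stepWeight p V) l =
      reflectSum p (cycleStep p V) l + ∑ j ∈ freshLetters l, reflectSum p (pushStep p V j) l := by
  rw [← reflectSum_sum, ← reflectSum_add]
  exact reflectSum_congr fun l' hl' => by rw [stepWeight, freshLetters_congr hl']

lemma reflectSum_pushStep {j : Fin k} (hj : 2 ≤ p j) (V : List (Fin k × ℕ) → ℤ → ℕ)
    (l : List (Fin k × ℕ)) (z : ℤ) :
    reflectSum p V ((j, p j - 1) :: l) (z - 1) + reflectSum p V ((j, 1) :: l) z =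
      reflectSum p (pushStep p V j) l z := by
  have h : pushStep p V j =
      fun l' => V ((j, 1) :: l') + V ((j, 1) :: l') + shiftSum (V ((j, p j - 1) :: l')) := by
    funext l'
    rw [pushStep, two_nsmul]
  rw [h, reflectSum_add, reflectSum_add, reflectSum_shiftSum]
  simp only [reflectSum, Nat.sub_sub_self (by omega : 1 ≤ p j), sub_add_cancel, Pi.add_apply,
    shiftSum]
  ring

lemma reflectSum_cycleStep {i : Fin k} {x : ℕ} (hx : 1 ≤ x) (hx' : x < p i)
    (V : List (Fin k × ℕ) → ℤ → ℕ) (l : List (Fin k × ℕ)) (z : ℤ) :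
    reflectSum p (cycleStep p V) ((i, x) :: l) z =
      Function.uncurry (reflectSum p V) (stepDown p i ((i, x) :: l, z)) +
        Function.uncurry (reflectSum p V) (stepUp p i ((i, x) :: l, z)) := by
  simp only [reflectSum, cycleStep, stepUp_self, stepDown_self,
    show p i - x + 1 = p i - (x - 1) by omega, show p i - x - 1 = p i - (x + 1) by omega,
    show p i - (x - 1) = p i ↔ x = 1 by omega, show p i - x = 1 ↔ x + 1 = p i by omega,
    reflectSum_add, reflectSum_ite, reflectSum_zero, Pi.add_apply]
  split_ifs <;> simp only [reflectSum, Function.uncurry, Pi.zero_apply] <;> ring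

lemma reflectSum_stepWeight (hp : ∀ i, 2 ≤ p i) (V : List (Fin k × ℕ) → ℤ → ℕ)
    {l : List (Fin k × ℕ)} (hl : IsNormalForm p l) (z : ℤ) :
    reflectSum p (stepWeight p V) l z =
      ∑ i, (Function.uncurry (reflectSum p V) (stepDown p i (l, z)) +
        Function.uncurry (reflectSum p V) (stepUp p i (l, z))) := by
  have hfresh : ∀ j ∈ freshLetters l,
      Function.uncurry (reflectSum p V) (stepDown p j (l, z)) +
        Function.uncurry (reflectSum p V) (stepUp p j (l, z)) = reflectSum p (pushStep p V j) l z :=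
    fun j hj => by
      rw [stepDown_of_mem_freshLetters hj, stepUp_of_mem_freshLetters hj]
      exact reflectSum_pushStep (hp j) V l z
  rw [reflectSum_stepWeight_eq, Pi.add_apply, Finset.sum_apply, ← Finset.sum_congr rfl hfresh]
  rcases l with _ | ⟨⟨i, x⟩, l⟩
  · simp [reflectSum, cycleStep, freshLetters]
  · rw [← Finset.add_sum_erase _ _ (Finset.mem_univ i), reflectSum_cycleStep hl.1 hl.2.1]
    rfl

end Intertwining

lemma walkCount_eq_reflectSum {k : ℕ} {p : Fin k → ℕ} (hp : ∀ i, 2 ≤ p i) (t : ℕ)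
    (s : NFState p) :
    walkCount (genPerm p hp) (NFState.base p) t s =
      Function.uncurry (reflectSum p (windingWeight p t)) s.1 := by
  induction t generalizing s with
  | zero =>
    obtain ⟨⟨_ | ⟨⟨i, x⟩, l⟩, z⟩, hl⟩ := s
    · simp [walkCount_zero, Subtype.ext_iff, NFState.base, windingWeight, reflectSum, pathCount,
        eq_comm]
    · simp [walkCount_zero, Subtype.ext_iff, NFState.base, windingWeight, reflectSum,
        reflectSum_zero]
  | succ t ih =>
    rw [walkCount_succ, Fintype.sum_prod_type, Function.uncurry_apply_pair, windingWeight,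
      reflectSum_stepWeight hp _ s.2]
    refine Finset.sum_congr rfl fun i _ => ?_
    rw [Fintype.sum_bool, ih, ih]
    rfl

/-- Decomposition lemma: for each `n` there are naturals `d_0,…,d_n` with
`f(n,m) = Σ_{ℓ=0}^{n} d_ℓ · c(ℓ,m)`, where `c(ℓ,m) = C(ℓ, (ℓ+m)/2)` if `|m| ≤ ℓ`
and `ℓ + m` is even, and `c(ℓ,m) = 0` otherwise; i.e. `Σ_m f(n,m)q^m` is a
nonnegative-integer combination of the `(q + q⁻¹)^ℓ`, `0 ≤ ℓ ≤ n`. -/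
theorem winding_decomposition (k : ℕ) (hk : 2 ≤ k) (p : Fin k → ℕ)
    (hp : ∀ i, 2 ≤ p i) (n : ℕ) :
    ∃ d : ℕ → ℕ, ∀ m : ℤ,
      (fcount p (fin0 hk) n m : ℤ) =
        ∑ ℓ ∈ Finset.range (n+1), (d ℓ : ℤ) *
          (if |m| ≤ (ℓ : ℤ) ∧ Even ((ℓ : ℤ) + m)
            then (Nat.choose ℓ (((ℓ : ℤ) + m) / 2).toNat : ℤ) else 0) := by
  obtain ⟨d, hd⟩ := isPathCountComb_windingWeight (p := p) n []
  refine ⟨d, fun m => ?_⟩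
  rw [fcount_eq_walkCount _ hp, walkCount_eq_reflectSum hp]
  simp only [Function.uncurry_apply_pair, reflectSum, hd, pathCount_eq]
  push_cast
  rfl
end

section
/- Let k ≥ 2 and p_1,…,p_k ≥ 2 be integers. Let ψ(n) be the number of words of length n in the generators of G(p_1,…,p_k) and their inverses whose value is the identity, and let g(n) be the number of words of length n whose value lies in the cyclic subgroup generated by Δ (the subgroup of all integer powers of Δ). Then limsup_{n→∞} ψ(n)^{1/n} = limsup_{n→∞} g(n)^{1/n} as real numbers; that is, the cogrowth count and the count of words valued in ⟨Δ⟩ have the same exponential growth rate. -/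
/-- The number of words of length `n` whose value lies in the cyclic subgroup
generated by `Δ = a_{i₀}^{p i₀}`. -/
noncomputable def deltaCount {k : ℕ} (p : Fin k → ℕ) (i₀ : Fin k) (n : ℕ) : ℕ :=
  Nat.card {w : Fin n → Fin k × Bool //
    ∃ m : ℤ, wordValue (fun i => (PresentedGroup.of i : PresentedGroup (Grels p i₀))) w
      = ((PresentedGroup.of i₀ : PresentedGroup (Grels p i₀)) ^ (p i₀)) ^ m}

/-!
Sending `a_i ↦ 1 / p_i` kills every relator, so it defines a character of `G(p_1, …, p_k)`
to `ℚ` with `Δ ↦ 1`. A word of length `n` valued in `⟨Δ⟩` therefore has value `Δ^m` with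
`|m| ≤ n`: such words take at most `2n + 1` values. Two words `u`, `v` of the same value give
the identity word `u v⁻¹` of length `2n`, so Cauchy–Schwarz over the values yields
`g(n)² ≤ (2n + 1)² ψ(2n)`. Together with `ψ ≤ g` and `(2n + 1)^{1/n} → 1` this forces the two
limsups to agree.
-/

section Words

lemma ofFn_comp_rev {α : Type*} {n : ℕ} (f : Fin n → α) :
    List.ofFn (fun j => f j.rev) = (List.ofFn f).reverse := by
  rw [List.ofFn_eq_map, List.ofFn_eq_map, ← List.map_reverse, List.finRange_reverse, List.map_map]
  rfl

variable {G : Type*} [Group G] {k : ℕ}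

lemma wordValue_eq_prod_ofFn (g : Fin k → G) {n : ℕ} (w : Fin n → Fin k × Bool) :
    wordValue g w = (List.ofFn fun j => if (w j).2 then g (w j).1 else (g (w j).1)⁻¹).prod := by
  rw [wordValue, List.ofFn_eq_map]

lemma wordValue_append (g : Fin k → G) {m n : ℕ} (u : Fin m → Fin k × Bool)
    (v : Fin n → Fin k × Bool) :
    wordValue g (Fin.append u v) = wordValue g u * wordValue g v := by
  simp only [wordValue_eq_prod_ofFn, ← List.prod_append, ← List.ofFn_fin_append]
  congr 2
  funext j
  induction j using Fin.addCases <;> simp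

def invWord {n : ℕ} (w : Fin n → Fin k × Bool) : Fin n → Fin k × Bool :=
  fun j => ((w j.rev).1, !(w j.rev).2)

lemma invWord_injective {n : ℕ} : Function.Injective (invWord (k := k) (n := n)) := by
  intro v v' h
  funext j
  simpa [invWord, Prod.ext_iff] using congrFun h j.rev

lemma wordValue_invWord (g : Fin k → G) {n : ℕ} (w : Fin n → Fin k × Bool) :
    wordValue g (invWord w) = (wordValue g w)⁻¹ := by
  rw [wordValue_eq_prod_ofFn, wordValue_eq_prod_ofFn, List.prod_inv_reverse, List.map_ofFn,
    ← ofFn_comp_rev]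
  congr 2
  funext j
  by_cases h : (w j.rev).2 <;> simp [invWord, h]

lemma card_words_le (n : ℕ) (P : (Fin n → Fin k × Bool) → Prop) :
    Nat.card {w : Fin n → Fin k × Bool // P w} ≤ (2 * k) ^ n := by
  refine (Finite.card_subtype_le P).trans_eq ?_
  simp [Nat.card_eq_fintype_card, mul_comm]

lemma cogrowthCount_le_card_zpow (g : Fin k → G) (d : G) (n : ℕ) :
    cogrowthCount g n ≤ Nat.card {w : Fin n → Fin k × Bool // ∃ m : ℤ, wordValue g w = d ^ m} :=
  Nat.card_le_card_of_injective (Subtype.map id fun w hw => ⟨0, by rw [id, hw, zpow_zero]⟩)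
    (Subtype.map_injective _ Function.injective_id)

lemma sq_card_fiber_le_cogrowthCount (g : Fin k → G) (n : ℕ) (x : G) :
    Nat.card {w : Fin n → Fin k × Bool // wordValue g w = x} ^ 2 ≤ cogrowthCount g (n + n) := by
  have hinj : Function.Injective
      fun uv : (Fin n → Fin k × Bool) × (Fin n → Fin k × Bool) => Fin.append uv.1 (invWord uv.2) :=
    (Fin.appendEquiv n n).injective.comp (Function.injective_id.prodMap invWord_injective)
  rw [sq, ← Nat.card_prod]
  refine Nat.card_le_card_of_injective (fun uv => ⟨Fin.append uv.1.1 (invWord uv.2.1), ?_⟩) ?_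
  · rw [wordValue_append, wordValue_invWord, uv.1.2, uv.2.2, mul_inv_cancel]
  · rintro ⟨u, v⟩ ⟨u', v'⟩ h
    obtain ⟨hu, hv⟩ :=
      Prod.ext_iff.mp (hinj (a₁ := (u.1, v.1)) (a₂ := (u'.1, v'.1)) (congrArg Subtype.val h))
    simp only [Prod.mk.injEq]
    exact ⟨Subtype.ext hu, Subtype.ext hv⟩

lemma sq_card_wordValue_mem_le (g : Fin k → G) (n : ℕ) (s : Finset G) :
    Nat.card {w : Fin n → Fin k × Bool // wordValue g w ∈ s} ^ 2
      ≤ s.card ^ 2 * cogrowthCount g (n + n) := by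
  classical
  have hfib : Nat.card {w : Fin n → Fin k × Bool // wordValue g w ∈ s}
      = ∑ x ∈ s, Nat.card {w : Fin n → Fin k × Bool // wordValue g w = x} := by
    simp only [Nat.card_eq_fintype_card, Fintype.card_subtype]
    rw [Finset.card_eq_sum_card_fiberwise (f := wordValue g) (t := s)
      fun w hw => by simpa using hw]
    refine Finset.sum_congr rfl fun x hx => ?_
    simp only [Finset.filter_filter]
    congr 1
    exact Finset.filter_congr fun w _ => ⟨And.right, fun hw => ⟨hw ▸ hx, hw⟩⟩
  calc _ = (∑ x ∈ s, Nat.card {w : Fin n → Fin k × Bool // wordValue g w = x}) ^ 2 := by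
        rw [hfib]
    _ ≤ s.card * ∑ x ∈ s, Nat.card {w : Fin n → Fin k × Bool // wordValue g w = x} ^ 2 :=
        sq_sum_le_card_mul_sum_sq
    _ ≤ s.card * ∑ _x ∈ s, cogrowthCount g (n + n) := by
        gcongr with x
        exact sq_card_fiber_le_cogrowthCount g n x
    _ = s.card ^ 2 * cogrowthCount g (n + n) := by
        rw [Finset.sum_const, smul_eq_mul, ← mul_assoc, sq]

lemma abs_toAdd_wordValue_le (φ : G →* Multiplicative ℚ) {g : Fin k → G}
    (hg : ∀ i, |(φ (g i)).toAdd| ≤ 1) {n : ℕ} (w : Fin n → Fin k × Bool) :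
    |(φ (wordValue g w)).toAdd| ≤ n := by
  have hletter : ∀ j, |(φ (if (w j).2 then g (w j).1 else (g (w j).1)⁻¹)).toAdd| ≤ 1 := by
    intro j
    split <;> simp [hg]
  rw [wordValue_eq_prod_ofFn, map_list_prod, List.map_ofFn, toAdd_list_sum, List.map_ofFn,
    List.sum_ofFn]
  calc _ ≤ ∑ j : Fin n, |(φ (if (w j).2 then g (w j).1 else (g (w j).1)⁻¹)).toAdd| :=
        Finset.abs_sum_le_sum_abs _ _
    _ ≤ ∑ _j : Fin n, (1 : ℚ) := Finset.sum_le_sum fun j _ => hletter j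
    _ = n := by simp

lemma sq_card_wordValue_mem_zpowers_le (φ : G →* Multiplicative ℚ) {g : Fin k → G}
    (hg : ∀ i, |(φ (g i)).toAdd| ≤ 1) {d : G} (hd : φ d = .ofAdd 1) (n : ℕ) :
    Nat.card {w : Fin n → Fin k × Bool // ∃ m : ℤ, wordValue g w = d ^ m} ^ 2
      ≤ (2 * n + 1) ^ 2 * cogrowthCount g (n + n) := by
  classical
  let s : Finset G := (Finset.Icc (-n : ℤ) n).image (d ^ ·)
  have hmem (w : Fin n → Fin k × Bool) (hw : ∃ m : ℤ, wordValue g w = d ^ m) :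
      wordValue g w ∈ s := by
    obtain ⟨m, hm⟩ := hw
    have hbound := abs_toAdd_wordValue_le φ hg w
    rw [hm, map_zpow, hd, ← ofAdd_zsmul, toAdd_ofAdd, zsmul_one] at hbound
    exact Finset.mem_image.mpr
      ⟨m, Finset.mem_Icc.mpr (abs_le.mp (by exact_mod_cast hbound)), hm.symm⟩
  have hs : s.card ≤ 2 * n + 1 := Finset.card_image_le.trans (by rw [Int.card_Icc]; omega)
  calc _ ≤ Nat.card {w : Fin n → Fin k × Bool // wordValue g w ∈ s} ^ 2 := by
        gcongr
        exact Nat.card_le_card_of_injective (Subtype.map id hmem)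
          (Subtype.map_injective _ Function.injective_id)
    _ ≤ s.card ^ 2 * cogrowthCount g (n + n) := sq_card_wordValue_mem_le g n s
    _ ≤ (2 * n + 1) ^ 2 * cogrowthCount g (n + n) := by gcongr

end Words

namespace Grels

variable {k : ℕ} (p : Fin k → ℕ) (i₀ : Fin k)

noncomputable def degree (hp : ∀ i, p i ≠ 0) : PresentedGroup (Grels p i₀) →* Multiplicative ℚ :=
  PresentedGroup.toGroup (f := fun i => .ofAdd (p i : ℚ)⁻¹) <| by
    rintro _ ⟨i, rfl⟩
    simp [← ofAdd_nsmul, hp]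

variable {p} (hp : ∀ i, p i ≠ 0)

lemma degree_of (i : Fin k) : degree p i₀ hp (.of i) = .ofAdd (p i : ℚ)⁻¹ :=
  PresentedGroup.toGroup.of _

lemma abs_degree_of_le (i : Fin k) : |(degree p i₀ hp (.of i)).toAdd| ≤ 1 := by
  rw [degree_of, toAdd_ofAdd, abs_inv, Nat.abs_cast]
  exact inv_le_one_of_one_le₀ (by exact_mod_cast Nat.one_le_iff_ne_zero.mpr (hp i))

lemma degree_delta : degree p i₀ hp (.of i₀ ^ p i₀) = .ofAdd 1 := by
  simp [degree_of, ← ofAdd_nsmul, hp]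

end Grels

section GrowthRate

open Filter Topology

lemma rpow_one_div_le_of_le_mul_pow {x y c : ℝ} {n : ℕ} (hn : n ≠ 0) (hx : 0 ≤ x) (hy : 0 ≤ y)
    (hc : 0 ≤ c) (h : x ≤ y * c ^ n) : x ^ (1 / (n : ℝ)) ≤ y ^ (1 / (n : ℝ)) * c := by
  calc x ^ (1 / (n : ℝ)) ≤ (y * c ^ n) ^ (1 / (n : ℝ)) := by gcongr
    _ = y ^ (1 / (n : ℝ)) * c := by
        rw [Real.mul_rpow hy (by positivity), one_div, Real.pow_rpow_inv_natCast hc hn]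

lemma tendsto_two_mul_add_one_rpow_one_div :
    Tendsto (fun n : ℕ => (2 * n + 1 : ℝ) ^ (1 / (n : ℝ))) atTop (𝓝 1) := by
  have hx : Tendsto (fun n : ℕ => (2 * n + 1 : ℝ)) atTop atTop :=
    tendsto_atTop_add_const_right _ 1
      (tendsto_natCast_atTop_atTop.const_mul_atTop two_pos)
  refine ((tendsto_rpow_div_mul_add 2 1 (-1) one_ne_zero.symm).comp hx).congr fun n => ?_
  simp only [Function.comp_apply]
  congr 1
  ring

variable {a b : ℕ → ℕ}

lemma isBoundedUnder_root_of_le_pow {C : ℕ} (h : ∀ n, a n ≤ C ^ n) :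
    IsBoundedUnder (· ≤ ·) atTop fun n => (a n : ℝ) ^ (1 / (n : ℝ)) := by
  refine isBoundedUnder_of_eventually_le (a := (C : ℝ)) ?_
  filter_upwards [eventually_ne_atTop 0] with n hn
  simpa using rpow_one_div_le_of_le_mul_pow hn (Nat.cast_nonneg (a n)) zero_le_one
    (Nat.cast_nonneg C) (by simpa using (by exact_mod_cast h n : (a n : ℝ) ≤ (C : ℝ) ^ n))

lemma limsup_root_le_of_sq_le
    (ha : IsBoundedUnder (· ≤ ·) atTop fun n => (a n : ℝ) ^ (1 / (n : ℝ)))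
    (h : ∀ n, b n ^ 2 ≤ (2 * n + 1) ^ 2 * a (n + n)) :
    limsup (fun n => (b n : ℝ) ^ (1 / (n : ℝ))) atTop
      ≤ limsup (fun n => (a n : ℝ) ^ (1 / (n : ℝ))) atTop := by
  refine le_of_forall_gt_imp_ge_of_dense fun c hc => ?_
  have hc0 : 0 ≤ c :=
    (le_limsup_of_frequently_le (Frequently.of_forall fun n => by positivity) ha).trans hc.le
  have hlt : ∀ᶠ n in atTop, (a (n + n) : ℝ) ^ (1 / ((n + n : ℕ) : ℝ)) < c :=
    (tendsto_atTop_mono (fun n => Nat.le_add_left n n) tendsto_id).eventually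
      (eventually_lt_of_limsup_lt hc ha)
  have hbound : ∀ᶠ n in atTop,
      (b n : ℝ) ^ (1 / (n : ℝ)) ≤ (2 * n + 1 : ℝ) ^ (1 / (n : ℝ)) * c := by
    filter_upwards [hlt, eventually_ne_atTop 0] with n hn hn0
    have ha2 : (a (n + n) : ℝ) ≤ c ^ (n + n) := by
      rw [one_div] at hn
      simpa only [Real.rpow_natCast] using
        (Real.rpow_inv_le_iff_of_pos (Nat.cast_nonneg _) hc0 (by positivity)).mp hn.le
    have hb : (b n : ℝ) ≤ (2 * n + 1) * c ^ n := by
      refine le_of_pow_le_pow_left₀ two_ne_zero (by positivity) ?_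
      calc (b n : ℝ) ^ 2 ≤ (2 * n + 1) ^ 2 * a (n + n) := by exact_mod_cast h n
        _ ≤ (2 * n + 1) ^ 2 * c ^ (n + n) := by gcongr
        _ = ((2 * n + 1) * c ^ n) ^ 2 := by ring
    exact rpow_one_div_le_of_le_mul_pow hn0 (by positivity) (by positivity) hc0 hb
  have ht : Tendsto (fun n : ℕ => (2 * n + 1 : ℝ) ^ (1 / (n : ℝ)) * c) atTop (𝓝 c) := by
    simpa using tendsto_two_mul_add_one_rpow_one_div.mul_const c
  calc _ ≤ limsup (fun n : ℕ => (2 * n + 1 : ℝ) ^ (1 / (n : ℝ)) * c) atTop :=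
        limsup_le_limsup hbound (isCoboundedUnder_le_of_le atTop fun n => by positivity)
          ht.isBoundedUnder_le
    _ = c := ht.limsup_eq

lemma limsup_root_eq_of_sq_le {C : ℕ} (hab : ∀ n, a n ≤ b n) (hb : ∀ n, b n ≤ C ^ n)
    (h : ∀ n, b n ^ 2 ≤ (2 * n + 1) ^ 2 * a (n + n)) :
    limsup (fun n => (a n : ℝ) ^ (1 / (n : ℝ))) atTop
      = limsup (fun n => (b n : ℝ) ^ (1 / (n : ℝ))) atTop :=
  le_antisymm
    (limsup_le_limsup (.of_forall fun n =>
      Real.rpow_le_rpow (by positivity) (by exact_mod_cast hab n) (by positivity))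
      (isCoboundedUnder_le_of_le atTop fun n => by positivity)
      (isBoundedUnder_root_of_le_pow hb))
    (limsup_root_le_of_sq_le (isBoundedUnder_root_of_le_pow fun n => (hab n).trans (hb n)) h)

end GrowthRate

open Filter in
/-- The cogrowth count `ψ` and the count `g` of words valued in `⟨Δ⟩` have the same
exponential growth rate: `limsup ψ(n)^{1/n} = limsup g(n)^{1/n}`. -/
theorem same_growth_rate (k : ℕ) (hk : 2 ≤ k) (p : Fin k → ℕ) (hp : ∀ i, 2 ≤ p i) :
    limsup (fun n : ℕ =>
        (cogrowthCount (fun i => (PresentedGroup.of i :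
            PresentedGroup (Grels p (fin0 hk)))) n : ℝ) ^ (1 / (n : ℝ))) atTop
      = limsup (fun n : ℕ => (deltaCount p (fin0 hk) n : ℝ) ^ (1 / (n : ℝ))) atTop := by
  have hp0 : ∀ i, p i ≠ 0 := fun i => (lt_of_lt_of_le two_pos (hp i)).ne'
  exact limsup_root_eq_of_sq_le (C := 2 * k) (fun n => cogrowthCount_le_card_zpow _ _ n)
    (fun n => card_words_le n _) fun n =>
      sq_card_wordValue_mem_zpowers_le (Grels.degree p (fin0 hk) hp0)
        (Grels.abs_degree_of_le (fin0 hk) hp0) (Grels.degree_delta (fin0 hk) hp0) n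
end
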